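/- arXiv:math/0606721 — 6 statements merged into one kernel-verified Lean document; each statement's English description precedes it below -/
import Mathlib

section
/- Let A be a bounded self-adjoint operator on a complex Hilbert space H, let z ∈ ℂ and δ > 0, and suppose that the spectrum of A contains no point of the interval [Re z − |Im z| − δ, Re z + |Im z| + δ]. Then for every u ∈ H, Re⟨(A − z)u, (A − z̄)u⟩ ≥ (2δ|Im z| + δ²)‖u‖². -/
/-!
Write `z = c + i y` and `B = A - c`. Polarization gives
`Re⟨(A - z)u, (A - z̄)u⟩ = ‖B u‖² - y²‖u‖²`. The operator `B` is self-adjoint and its spectrum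
lies outside the open disc of radius `r = |y| + δ`, so `‖B⁻¹‖ = spectralRadius B⁻¹ ≤ 1/r`, i.e.
`‖B u‖ ≥ r‖u‖`; finally `r² - y² ≥ 2δ|y| + δ²`.
-/

open scoped ComplexInnerProductSpace

section CStarAlgebra

variable {A : Type*} [CStarAlgebra A]

lemma IsSelfAdjoint.lt_norm_of_mem_spectrum_sub_algebraMap {a : A} (ha : IsSelfAdjoint a)
    {c r : ℝ} (h : ∀ x ∈ Set.Icc (c - r) (c + r), (x : ℂ) ∉ spectrum ℂ a)
    {μ : ℂ} (hμ : μ ∈ spectrum ℂ (a - algebraMap ℂ A c)) : r < ‖μ‖ := by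
  rw [← spectrum.sub_singleton_eq] at hμ
  obtain ⟨x, hx, _, rfl, rfl⟩ := hμ
  have hre := ha.mem_spectrum_eq_re hx
  show r < ‖x - c‖
  by_contra! hle
  rw [hre, ← Complex.ofReal_sub, Complex.norm_real, Real.norm_eq_abs, abs_sub_le_iff] at hle
  exact h x.re ⟨by linarith, by linarith⟩ (hre ▸ hx)

lemma IsSelfAdjoint.norm_units_inv_le {a : Aˣ} (ha : IsSelfAdjoint (a : A)) {r : ℝ} (hr : 0 < r)
    (h : ∀ μ ∈ spectrum ℂ (a : A), r ≤ ‖μ‖) : ‖(↑a⁻¹ : A)‖ ≤ r⁻¹ := by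
  have hinv : IsSelfAdjoint (↑a⁻¹ : A) := by
    simpa only [Ring.inverse_unit] using ha.ringInverse
  have hspec : ∀ ν ∈ spectrum ℂ (↑a⁻¹ : A), ‖ν‖ ≤ r⁻¹ := by
    intro ν hν
    rw [← spectrum.map_inv, Set.mem_inv] at hν
    have hle := h _ hν
    rw [norm_inv] at hle
    exact (le_inv_comm₀ hr (inv_pos.mp (hr.trans_le hle))).mp hle
  rw [← hinv.toReal_spectralRadius_complex_eq_norm]
  refine ENNReal.toReal_le_of_le_ofReal (by positivity) (iSup₂_le fun ν hν => ?_)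
  rw [← enorm_eq_nnnorm, ← ofReal_norm]
  exact ENNReal.ofReal_le_ofReal (hspec ν hν)

end CStarAlgebra

section InnerProductSpace

variable {H : Type*} [NormedAddCommGroup H] [InnerProductSpace ℂ H]

lemma ContinuousLinearMap.mul_norm_le_norm_apply_of_isSelfAdjoint [CompleteSpace H]
    {B : H →L[ℂ] H} (hB : IsSelfAdjoint B) {r : ℝ} (hr : 0 < r)
    (h : ∀ μ ∈ spectrum ℂ B, r ≤ ‖μ‖) (u : H) : r * ‖u‖ ≤ ‖B u‖ := by
  have h0 : (0 : ℂ) ∉ spectrum ℂ B := fun h0 => by simpa using hr.trans_le (h 0 h0)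
  obtain ⟨U, rfl⟩ := (spectrum.zero_notMem_iff ℂ).mp h0
  rw [← le_inv_mul_iff₀ hr]
  calc ‖u‖ = ‖(↑U⁻¹ : H →L[ℂ] H) ((U : H →L[ℂ] H) u)‖ := by
        rw [← mul_apply_eq_comp, Units.inv_mul, one_apply_eq_self]
    _ ≤ ‖(↑U⁻¹ : H →L[ℂ] H)‖ * ‖(U : H →L[ℂ] H) u‖ := ContinuousLinearMap.le_opNorm _ _
    _ ≤ r⁻¹ * ‖(U : H →L[ℂ] H) u‖ := by gcongr; exact hB.norm_units_inv_le hr h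

lemma re_inner_sub_smul_sub_conj_smul (z : ℂ) (u v : H) :
    (⟪v - z • u, v - (starRingEnd ℂ z) • u⟫).re
      = ‖v - (z.re : ℂ) • u‖ ^ 2 - z.im ^ 2 * ‖u‖ ^ 2 := by
  have hsum : (v - z • u) + (v - (starRingEnd ℂ z) • u) = (2 : ℂ) • (v - (z.re : ℂ) • u) := by
    linear_combination (norm := module) -(Complex.add_conj z • u)
  have hdiff : (v - z • u) - (v - (starRingEnd ℂ z) • u) = (-(2 * z.im * Complex.I) : ℂ) • u := by
    linear_combination (norm := module) -(Complex.sub_conj z • u)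
  rw [← RCLike.re_to_complex, re_inner_eq_norm_add_mul_self_sub_norm_sub_mul_self_div_four, hsum,
    hdiff, norm_smul, norm_smul]
  simp only [norm_neg, norm_mul, Complex.norm_ofNat, Complex.norm_real, Real.norm_eq_abs,
    Complex.norm_I, mul_one]
  rw [← sq_abs z.im]
  ring

end InnerProductSpace

/-- If `A` is a bounded self-adjoint operator whose spectrum misses the interval
`[Re z − |Im z| − δ, Re z + |Im z| + δ]`, then for every `u`,
`Re⟨(A − z)u, (A − z̄)u⟩ ≥ (2δ|Im z| + δ²)‖u‖²`. -/
theorem stmt1 {H : Type*} [NormedAddCommGroup H] [InnerProductSpace ℂ H] [CompleteSpace H]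
    (A : H →L[ℂ] H) (hA : IsSelfAdjoint A) (z : ℂ) (δ : ℝ) (hδ : 0 < δ)
    (hspec : ∀ x ∈ Set.Icc (z.re - |z.im| - δ) (z.re + |z.im| + δ),
      (x : ℂ) ∉ spectrum ℂ A) :
    ∀ u : H, (2 * δ * |z.im| + δ ^ 2) * ‖u‖ ^ 2 ≤
      (⟪A u - z • u, A u - (starRingEnd ℂ z) • u⟫).re := by
  intro u
  have hB : IsSelfAdjoint (A - algebraMap ℂ _ (z.re : ℂ)) :=
    hA.sub (.algebraMap _ (Complex.conj_ofReal _))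
  have hbound := ContinuousLinearMap.mul_norm_le_norm_apply_of_isSelfAdjoint hB
    (r := |z.im| + δ) (by positivity)
    (fun μ hμ => (hA.lt_norm_of_mem_spectrum_sub_algebraMap
      (by simpa only [sub_sub, add_assoc] using hspec) hμ).le) u
  rw [sub_apply, Algebra.algebraMap_eq_smul_one, smul_apply, one_apply_eq_self] at hbound
  rw [re_inner_sub_smul_sub_conj_smul, ← sq_abs z.im]
  nlinarith [pow_le_pow_left₀ (by positivity) hbound 2, abs_nonneg z.im, sq_nonneg ‖u‖]
end

section
/- Let A be a bounded self-adjoint operator on a complex Hilbert space H and let L be an n-dimensional subspace of H with basis of unit vectors e₁,…,eₙ; let M(z) and β be as defined in the context. Let z ∈ ℂ and δ > 0 be such that Spec(A) ∩ [Re z − |Im z| − δ, Re z + |Im z| + δ] = ∅. Then for every vector u ∈ ℂⁿ, ‖M(z)u‖ ≥ (2δ|Im z| + δ²)β²‖u‖; in particular M(z) is invertible and ‖M(z)⁻¹‖ ≤ ((2δ|Im z| + δ²)β²)⁻¹. -/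
open scoped ComplexInnerProductSpace

/-!
Put `v = ∑ₖ conj(uₖ) • eₖ`. The matrices are Gram matrices, so
`⟪u, M(z) u⟫ = ‖A v‖² - 2 z ⟪v, A v⟫ + z² ‖v‖²`, and since `⟪v, A v⟫` is real its real part is
`‖(A - Re z) v‖² - (Im z)² ‖v‖²`. The spectrum of `A` lies at distance at least `|Im z| + δ`
from `Re z`, so the functional calculus gives `‖(A - Re z) v‖ ≥ (|Im z| + δ) ‖v‖`; hence
`Re ⟪u, M(z) u⟫ ≥ (2δ|Im z| + δ²) ‖v‖² ≥ (2δ|Im z| + δ²) β² ‖u‖²`. Cauchy–Schwarz turns this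
coercivity into the lower bound on `‖M(z) u‖`, which in finite dimension yields invertibility
and the bound on the inverse.
-/

theorem mul_norm_le_norm_apply_of_mul_norm_sq_le_re_inner {𝕜 E : Type*} [RCLike 𝕜]
    [NormedAddCommGroup E] [InnerProductSpace 𝕜 E] {C : ℝ} (T : E → E) (u : E)
    (h : C * ‖u‖ ^ 2 ≤ RCLike.re (inner 𝕜 u (T u))) : C * ‖u‖ ≤ ‖T u‖ := by
  rcases eq_or_ne u 0 with rfl | hu
  · simp
  have hre : RCLike.re (inner 𝕜 u (T u)) ≤ ‖u‖ * ‖T u‖ :=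
    (RCLike.re_le_norm _).trans (norm_inner_le_norm u _)
  have hu' : 0 < ‖u‖ := norm_pos_iff.mpr hu
  nlinarith

namespace Matrix

variable {𝕜 ι : Type*} [RCLike 𝕜] [Fintype ι] [DecidableEq ι] {M : Matrix ι ι 𝕜} {C : ℝ}

theorem isUnit_of_mul_norm_le_norm_toEuclideanCLM (hC : 0 < C)
    (hM : ∀ u, C * ‖u‖ ≤ ‖toEuclideanCLM (𝕜 := 𝕜) M u‖) : IsUnit M := by
  rw [← mulVec_injective_iff_isUnit]
  intro x y hxy
  have h := hM (WithLp.toLp 2 (x - y))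
  rw [toEuclideanCLM_toLp, mulVec_sub, hxy, sub_self, WithLp.toLp_zero, norm_zero] at h
  have hzero : WithLp.toLp 2 (x - y) = 0 := norm_le_zero_iff.mp (nonpos_of_mul_nonpos_right h hC)
  exact sub_eq_zero.mp ((WithLp.toLp_eq_zero 2).mp hzero)

theorem norm_toEuclideanCLM_inv_le (hC : 0 < C)
    (hM : ∀ u, C * ‖u‖ ≤ ‖toEuclideanCLM (𝕜 := 𝕜) M u‖) :
    ‖toEuclideanCLM (𝕜 := 𝕜) M⁻¹‖ ≤ C⁻¹ := by
  have hdet := (isUnit_iff_isUnit_det M).mp (isUnit_of_mul_norm_le_norm_toEuclideanCLM hC hM)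
  have hinv : ∀ w, toEuclideanCLM (𝕜 := 𝕜) M (toEuclideanCLM (𝕜 := 𝕜) M⁻¹ w) = w := fun w => by
    change (toEuclideanCLM (𝕜 := 𝕜) M * toEuclideanCLM (𝕜 := 𝕜) M⁻¹) w = w
    rw [← map_mul, mul_nonsing_inv M hdet, map_one, one_apply_eq_self]
  refine ContinuousLinearMap.opNorm_le_bound _ (inv_nonneg.2 hC.le) fun w => ?_
  rw [le_inv_mul_iff₀ hC]
  simpa [hinv] using hM (toEuclideanCLM (𝕜 := 𝕜) M⁻¹ w)

end Matrix

section HilbertSpace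

variable {H : Type*} [NormedAddCommGroup H] [InnerProductSpace ℂ H]

theorem inner_toEuclideanCLM_eq_inner_sum {ι : Type*} [Fintype ι] [DecidableEq ι]
    (x y : ι → H) (G : Matrix ι ι ℂ) (hG : ∀ j k, G j k = ⟪x k, y j⟫)
    (u : EuclideanSpace ℂ ι) :
    ⟪u, Matrix.toEuclideanCLM (𝕜 := ℂ) G u⟫ =
      ⟪∑ k, starRingEnd ℂ (u k) • x k, ∑ j, starRingEnd ℂ (u j) • y j⟫ := by
  simp only [EuclideanSpace.inner_eq_star_dotProduct, Matrix.ofLp_toEuclideanCLM, dotProduct,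
    Matrix.mulVec, Finset.sum_mul, sum_inner, inner_sum, inner_smul_left, inner_smul_right,
    Complex.conj_conj, hG, Finset.mul_sum, Pi.star_apply, RCLike.star_def]
  refine Finset.sum_congr rfl fun k _ => Finset.sum_congr rfl fun j _ => ?_
  ring

variable [CompleteSpace H]

theorem IsSelfAdjoint.sq_mul_norm_sq_le_norm_sub_smul_sq {A : H →L[ℂ] H} (hA : IsSelfAdjoint A)
    {c r : ℝ} (hs : ∀ x : ℝ, (x : ℂ) ∈ spectrum ℂ A → r ^ 2 ≤ (x - c) ^ 2) (v : H) :
    r ^ 2 * ‖v‖ ^ 2 ≤ ‖A v - (c : ℂ) • v‖ ^ 2 := by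
  set B := A - algebraMap ℝ (H →L[ℂ] H) c
  have hB : IsSelfAdjoint B := hA.sub (.algebraMap _ (.all c))
  have hBv : B v = A v - (c : ℂ) • v := by simp [B, Algebra.algebraMap_eq_smul_one]
  have hle : algebraMap ℝ (H →L[ℂ] H) (r ^ 2) ≤ B ^ 2 := by
    have hcfc : cfc (fun x : ℝ => (x - c) ^ 2) A = B ^ 2 := by
      rw [cfc_pow (fun x : ℝ => x - c) 2 A, cfc_sub (fun x : ℝ => x) (fun _ : ℝ => c) A,
        cfc_id' ℝ A, cfc_const c A]
    rw [← hcfc]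
    refine algebraMap_le_cfc _ _ A fun x hx => hs x ?_
    simpa using spectrum.algebraMap_mem ℂ hx
  have hBB : ⟪B (B v), v⟫ = ⟪B v, B v⟫ := hB.isSymmetric (B v) v
  have hpos := ((ContinuousLinearMap.le_def _ _).1 hle).re_inner_nonneg_left v
  rw [sub_apply, pow_two, mul_apply_eq_comp, inner_sub_left,
    map_sub, hBB, inner_self_eq_norm_sq, hBv] at hpos
  have hr : RCLike.re ⟪(algebraMap ℝ (H →L[ℂ] H) (r ^ 2)) v, v⟫ = r ^ 2 * ‖v‖ ^ 2 := by
    rw [Algebra.algebraMap_eq_smul_one, smul_apply, one_apply_eq_self,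
      RCLike.real_smul_eq_coe_smul (K := ℂ), inner_smul_real_left, RCLike.smul_re,
      inner_self_eq_norm_sq]
  linarith

theorem IsSelfAdjoint.re_inner_pencil {A : H →L[ℂ] H} (hA : IsSelfAdjoint A) (z : ℂ) (v : H) :
    (⟪A v, A v⟫ - 2 * z * ⟪v, A v⟫ + z ^ 2 * ⟪v, v⟫).re =
      ‖A v - (z.re : ℂ) • v‖ ^ 2 - z.im ^ 2 * ‖v‖ ^ 2 := by
  have hsymm : ⟪A v, v⟫ = ⟪v, A v⟫ := hA.isSymmetric v v
  have hreal : (⟪v, A v⟫ : ℂ).im = 0 := by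
    rw [← Complex.conj_eq_iff_im, inner_conj_symm, hsymm]
  rw [@norm_sub_sq ℂ, inner_smul_right, hsymm]
  simp only [inner_self_eq_norm_sq_to_K, Complex.coe_algebraMap, sq, Complex.add_re,
    Complex.sub_re, Complex.mul_re, Complex.ofReal_re, Complex.ofReal_im, mul_zero, sub_zero,
    Complex.re_ofNat, Complex.im_ofNat, zero_mul, Complex.mul_im, add_zero, hreal, RCLike.mul_re,
    RCLike.re_to_complex, RCLike.im_to_complex, Complex.coe_smul, norm_smul, Real.norm_eq_abs]
  rw [mul_mul_mul_comm, abs_mul_abs_self]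
  ring

theorem mul_norm_sq_le_re_inner_pencil {ι : Type*} [Fintype ι] [DecidableEq ι]
    {A : H →L[ℂ] H} (hA : IsSelfAdjoint A) (e : ι → H) {β : ℝ} (hβ : 0 ≤ β)
    (hβ' : ∀ c : ι → ℂ, β * Real.sqrt (∑ j, ‖c j‖ ^ 2) ≤ ‖∑ j, c j • e j‖)
    {A0 A1 A2 : Matrix ι ι ℂ} (hA0 : ∀ j k, A0 j k = ⟪A (e k), A (e j)⟫)
    (hA1 : ∀ j k, A1 j k = ⟪e k, A (e j)⟫) (hA2 : ∀ j k, A2 j k = ⟪e k, e j⟫)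
    (z : ℂ) {δ : ℝ} (hδ : 0 ≤ δ)
    (hgap : ∀ x : ℝ, (x : ℂ) ∈ spectrum ℂ A → (|z.im| + δ) ^ 2 ≤ (x - z.re) ^ 2)
    (u : EuclideanSpace ℂ ι) :
    (2 * δ * |z.im| + δ ^ 2) * β ^ 2 * ‖u‖ ^ 2 ≤
      RCLike.re ⟪u, Matrix.toEuclideanCLM (𝕜 := ℂ) (A0 - (2 * z) • A1 + z ^ 2 • A2) u⟫ := by
  set v := ∑ k, starRingEnd ℂ (u k) • e k
  have hAv : ∑ k, starRingEnd ℂ (u k) • A (e k) = A v := by simp [v, map_sum, map_smul]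
  have hform : ⟪u, Matrix.toEuclideanCLM (𝕜 := ℂ) (A0 - (2 * z) • A1 + z ^ 2 • A2) u⟫ =
      ⟪A v, A v⟫ - 2 * z * ⟪v, A v⟫ + z ^ 2 * ⟪v, v⟫ := by
    simp only [map_add, map_sub, map_smul, add_apply, sub_apply, smul_apply, inner_add_right,
      inner_sub_right, inner_smul_right, inner_toEuclideanCLM_eq_inner_sum _ _ A0 hA0,
      inner_toEuclideanCLM_eq_inner_sum _ _ A1 hA1, inner_toEuclideanCLM_eq_inner_sum _ _ A2 hA2,
      hAv]
    ring
  have hβv : β * ‖u‖ ≤ ‖v‖ := by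
    simpa [EuclideanSpace.norm_eq] using hβ' fun k => starRingEnd ℂ (u k)
  rw [RCLike.re_to_complex, hform, hA.re_inner_pencil]
  calc (2 * δ * |z.im| + δ ^ 2) * β ^ 2 * ‖u‖ ^ 2
      = (2 * δ * |z.im| + δ ^ 2) * (β * ‖u‖) ^ 2 := by ring
    _ ≤ (2 * δ * |z.im| + δ ^ 2) * ‖v‖ ^ 2 := by gcongr
    _ = (|z.im| + δ) ^ 2 * ‖v‖ ^ 2 - z.im ^ 2 * ‖v‖ ^ 2 := by rw [add_sq, sq_abs]; ring
    _ ≤ _ := by linarith [hA.sq_mul_norm_sq_le_norm_sub_smul_sq hgap v]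

end HilbertSpace

theorem stmt2_general {H : Type*} [NormedAddCommGroup H] [InnerProductSpace ℂ H] [CompleteSpace H]
    (A : H →L[ℂ] H) (hA : IsSelfAdjoint A) (n : ℕ)
    (e : Fin n → H)
    (β : ℝ) (hβ : 0 < β)
    (hβ' : ∀ c : Fin n → ℂ, β * Real.sqrt (∑ j, ‖c j‖ ^ 2) ≤ ‖∑ j, c j • e j‖)
    (A0 A1 A2 : Matrix (Fin n) (Fin n) ℂ)
    (hA0 : ∀ j k, A0 j k = ⟪A (e k), A (e j)⟫)
    (hA1 : ∀ j k, A1 j k = ⟪e k, A (e j)⟫)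
    (hA2 : ∀ j k, A2 j k = ⟪e k, e j⟫)
    (z : ℂ) (δ : ℝ) (hδ : 0 < δ)
    (hspec : ∀ x ∈ Set.Icc (z.re - |z.im| - δ) (z.re + |z.im| + δ),
      (x : ℂ) ∉ spectrum ℂ A) :
    (∀ u : EuclideanSpace ℂ (Fin n),
        (2 * δ * |z.im| + δ ^ 2) * β ^ 2 * ‖u‖ ≤
          ‖Matrix.toEuclideanCLM (𝕜 := ℂ) (A0 - (2 * z) • A1 + z ^ 2 • A2) u‖) ∧
      IsUnit (A0 - (2 * z) • A1 + z ^ 2 • A2) ∧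
      ‖Matrix.toEuclideanCLM (𝕜 := ℂ) (A0 - (2 * z) • A1 + z ^ 2 • A2)⁻¹‖ ≤
        ((2 * δ * |z.im| + δ ^ 2) * β ^ 2)⁻¹ := by
  have hC : 0 < (2 * δ * |z.im| + δ ^ 2) * β ^ 2 := by positivity
  have hgap : ∀ x : ℝ, (x : ℂ) ∈ spectrum ℂ A → (|z.im| + δ) ^ 2 ≤ (x - z.re) ^ 2 := by
    intro x hx
    have hx' : x ∉ Set.Icc (z.re - |z.im| - δ) (z.re + |z.im| + δ) := fun h => hspec x h hx
    rw [Set.mem_Icc, not_and_or, not_le, not_le] at hx'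
    rcases hx' with h | h <;> nlinarith [abs_nonneg z.im]
  have hbound u := mul_norm_le_norm_apply_of_mul_norm_sq_le_re_inner _ u
    (mul_norm_sq_le_re_inner_pencil hA e hβ.le hβ' hA0 hA1 hA2 z hδ.le hgap u)
  exact ⟨hbound, Matrix.isUnit_of_mul_norm_le_norm_toEuclideanCLM hC hbound,
    Matrix.norm_toEuclideanCLM_inv_le hC hbound⟩

/-- If the spectrum of the bounded self-adjoint operator `A` misses the interval
`[Re z − |Im z| − δ, Re z + |Im z| + δ]`, then `‖M(z)u‖ ≥ (2δ|Im z| + δ²)β²‖u‖` for all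
`u ∈ ℂⁿ`; in particular `M(z)` is invertible with `‖M(z)⁻¹‖ ≤ ((2δ|Im z| + δ²)β²)⁻¹`. -/
theorem stmt2 {H : Type*} [NormedAddCommGroup H] [InnerProductSpace ℂ H] [CompleteSpace H]
    (A : H →L[ℂ] H) (hA : IsSelfAdjoint A) (n : ℕ)
    (e : Fin n → H) (he : ∀ j, ‖e j‖ = 1) (hli : LinearIndependent ℂ e)
    (β : ℝ) (hβ : 0 < β)
    (hβ' : ∀ c : Fin n → ℂ, β * Real.sqrt (∑ j, ‖c j‖ ^ 2) ≤ ‖∑ j, c j • e j‖)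
    (A0 A1 A2 : Matrix (Fin n) (Fin n) ℂ)
    (hA0 : ∀ j k, A0 j k = ⟪A (e k), A (e j)⟫)
    (hA1 : ∀ j k, A1 j k = ⟪e k, A (e j)⟫)
    (hA2 : ∀ j k, A2 j k = ⟪e k, e j⟫)
    (z : ℂ) (δ : ℝ) (hδ : 0 < δ)
    (hspec : ∀ x ∈ Set.Icc (z.re - |z.im| - δ) (z.re + |z.im| + δ),
      (x : ℂ) ∉ spectrum ℂ A) :
    (∀ u : EuclideanSpace ℂ (Fin n),
        (2 * δ * |z.im| + δ ^ 2) * β ^ 2 * ‖u‖ ≤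
          ‖Matrix.toEuclideanCLM (𝕜 := ℂ) (A0 - (2 * z) • A1 + z ^ 2 • A2) u‖) ∧
      IsUnit (A0 - (2 * z) • A1 + z ^ 2 • A2) ∧
      ‖Matrix.toEuclideanCLM (𝕜 := ℂ) (A0 - (2 * z) • A1 + z ^ 2 • A2)⁻¹‖ ≤
        ((2 * δ * |z.im| + δ ^ 2) * β ^ 2)⁻¹ :=
  stmt2_general A hA n e β hβ hβ' A0 A1 A2 hA0 hA1 hA2 z δ hδ hspec
end

section
/- (Theorem 2.3) Let A be a bounded self-adjoint operator on a complex Hilbert space H, and let L be an n-dimensional subspace of H with basis of unit vectors e₁,…,eₙ; let A₀, A₁, A₂ and β be as defined in the context. Let Ã₀, Ã₁, Ã₂ be n×n complex matrices with ‖Aₚ − Ãₚ‖ ≤ εₚ for some εₚ ≥ 0, p = 0,1,2. If the matrix Ã₀ − 2ζÃ₁ + ζ²Ã₂ is singular for some ζ ∈ ℂ, then Spec(A) ∩ [Re ζ − δ̃, Re ζ + δ̃] ≠ ∅, where δ̃ = √(|Im ζ|² + β⁻²(|ζ|²ε₂ + 2|ζ|ε₁ + ε₀)). -/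
open scoped ComplexInnerProductSpace

/-!
Normalise a null vector `c` of the perturbed pencil `Ã₀ - 2ζÃ₁ + ζ²Ã₂` and put
`u = ∑ⱼ c̄ⱼ eⱼ`, so that `‖u‖ ≥ β`. The entries of `A₀, A₁, A₂` are Gram products, so
`⟪c, (A₀ - 2ζA₁ + ζ²A₂) c⟫ = ‖Au‖² - 2ζ⟪u, Au⟫ + ζ²‖u‖²`, and since the perturbed form
vanishes at `c` this number has modulus at most `E = |ζ|²ε₂ + 2|ζ|ε₁ + ε₀`. For self-adjoint `A`
its real part is `‖(A - Re ζ) u‖² - (Im ζ)²‖u‖²`, so `‖(A - Re ζ) u‖² ≤ (|Im ζ|² + β⁻²E) ‖u‖²`.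
Finally `dist(x, Spec A) ‖u‖ ≤ ‖(A - x) u‖` for real `x`, because by the functional calculus
the inverse of the self-adjoint operator `A - x` has norm `1 / dist(x, Spec A)`.
-/

section InnerProductSpace

variable {H : Type*} [NormedAddCommGroup H] [InnerProductSpace ℂ H]

section Complete

variable [CompleteSpace H]

theorem ContinuousLinearMap.mul_norm_le_norm_apply_of_forall_le_norm_spectrum
    {T : H →L[ℂ] H} [IsStarNormal T] {d : ℝ} (hd : 0 ≤ d)
    (h : ∀ μ ∈ spectrum ℂ T, d ≤ ‖μ‖) (u : H) : d * ‖u‖ ≤ ‖T u‖ := by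
  rcases hd.eq_or_lt with rfl | hd
  · simp
  have hT : IsUnit T := spectrum.isUnit_of_zero_notMem ℂ fun h0 => by
    simpa using hd.trans_le (h 0 h0)
  have hinv : ‖Ring.inverse T‖ ≤ d⁻¹ := by
    rw [← cfc_ringInverse_id (R := ℂ) T hT]
    exact norm_cfc_le (by positivity) fun μ hμ => by
      rw [norm_inv]; exact inv_anti₀ hd (h μ hμ)
  have hu : Ring.inverse T (T u) = u := by
    simpa using congr($(Ring.inverse_mul_cancel T hT) u)
  calc d * ‖u‖ = d * ‖Ring.inverse T (T u)‖ := by rw [hu]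
    _ ≤ d * (d⁻¹ * ‖T u‖) := by
      gcongr
      exact (Ring.inverse T).le_of_opNorm_le hinv _
    _ = ‖T u‖ := by field_simp

theorem IsSelfAdjoint.exists_mem_spectrum_norm_sub_mul_le [Nontrivial H] {A : H →L[ℂ] H}
    (hA : IsSelfAdjoint A) (x : ℝ) (u : H) :
    ∃ μ ∈ spectrum ℂ A, ‖μ - x‖ * ‖u‖ ≤ ‖A u - (x : ℂ) • u‖ := by
  obtain ⟨μ, hμ, hmin⟩ := (spectrum.isCompact A).exists_isMinOn (spectrum.nonempty A)
    (continuous_id.sub continuous_const).norm.continuousOn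
  refine ⟨μ, hμ, ?_⟩
  have hT : IsSelfAdjoint (A - algebraMap ℂ (H →L[ℂ] H) x) :=
    hA.sub (.algebraMap _ (Complex.conj_ofReal x))
  have := hT.isStarNormal
  have hspec : ∀ ν ∈ spectrum ℂ (A - algebraMap ℂ (H →L[ℂ] H) x), ‖μ - x‖ ≤ ‖ν‖ := by
    rw [← spectrum.sub_singleton_eq]
    rintro _ ⟨ν, hν, _, rfl, rfl⟩
    exact hmin hν
  simpa [Algebra.algebraMap_eq_smul_one] using
    ContinuousLinearMap.mul_norm_le_norm_apply_of_forall_le_norm_spectrum (norm_nonneg _) hspec u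

end Complete

theorem LinearMap.IsSymmetric.norm_apply_sub_re_smul_sq {T : H →ₗ[ℂ] H} (hT : T.IsSymmetric)
    (u : H) (ζ : ℂ) :
    ‖T u - (ζ.re : ℂ) • u‖ ^ 2 =
      (⟪T u, T u⟫ - 2 * ζ * ⟪u, T u⟫ + ζ ^ 2 * ⟪u, u⟫).re + ζ.im ^ 2 * ‖u‖ ^ 2 := by
  have hTu : ⟪T u, u⟫ = ⟪u, T u⟫ := hT u u
  have him : (⟪u, T u⟫).im = 0 := by simpa [hTu] using hT.im_inner_apply_self u
  rw [@norm_sub_sq ℂ, norm_smul, inner_smul_right, hTu, inner_self_eq_norm_sq_to_K,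
    inner_self_eq_norm_sq_to_K]
  simp [Complex.mul_re, him, sq]
  linear_combination (‖u‖ * ‖u‖) * abs_mul_abs_self ζ.re

theorem IsSelfAdjoint.exists_mem_spectrum_Icc_of_norm_le [CompleteSpace H] {A : H →L[ℂ] H}
    (hA : IsSelfAdjoint A) {u : H} {β E : ℝ} (hβ : 0 < β) (hu : β ≤ ‖u‖) (ζ : ℂ)
    (hq : ‖⟪A u, A u⟫ - 2 * ζ * ⟪u, A u⟫ + ζ ^ 2 * ⟪u, u⟫‖ ≤ E) :
    ∃ x ∈ Set.Icc (ζ.re - √(|ζ.im| ^ 2 + (β ^ 2)⁻¹ * E)) (ζ.re + √(|ζ.im| ^ 2 + (β ^ 2)⁻¹ * E)),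
      (x : ℂ) ∈ spectrum ℂ A := by
  have hu0 : 0 < ‖u‖ := hβ.trans_le hu
  have : Nontrivial H := ⟨u, 0, norm_pos_iff.mp hu0⟩
  obtain ⟨μ, hμ, hμu⟩ := hA.exists_mem_spectrum_norm_sub_mul_le ζ.re u
  have hμre : μ = μ.re := hA.mem_spectrum_eq_re hμ
  refine ⟨μ.re, ?_, hμre ▸ hμ⟩
  have hdist : |μ.re - ζ.re| * ‖u‖ ≤ ‖A u - (ζ.re : ℂ) • u‖ := by
    rwa [hμre, ← Complex.ofReal_sub, Complex.norm_real, Real.norm_eq_abs] at hμu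
  have hres : ‖A u - (ζ.re : ℂ) • u‖ ^ 2 ≤ E + ζ.im ^ 2 * ‖u‖ ^ 2 :=
    (hA.isSymmetric.norm_apply_sub_re_smul_sq u ζ).trans_le
      (add_le_add_left ((Complex.re_le_norm _).trans hq) _)
  have hE : E ≤ (β ^ 2)⁻¹ * E * ‖u‖ ^ 2 := by
    have hE0 : 0 ≤ E := (norm_nonneg _).trans hq
    have hβu : 1 ≤ ‖u‖ ^ 2 / β ^ 2 :=
      (one_le_div (by positivity)).mpr (pow_le_pow_left₀ hβ.le hu 2)
    calc E ≤ E * (‖u‖ ^ 2 / β ^ 2) := le_mul_of_one_le_right hE0 hβu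
      _ = (β ^ 2)⁻¹ * E * ‖u‖ ^ 2 := by ring
  have hsq : (μ.re - ζ.re) ^ 2 ≤ |ζ.im| ^ 2 + (β ^ 2)⁻¹ * E := by
    have h := pow_le_pow_left₀ (by positivity) hdist 2
    rw [mul_pow, sq_abs] at h
    rw [sq_abs]
    refine le_of_mul_le_mul_right ?_ (pow_pos hu0 2)
    linarith
  have := Real.abs_le_sqrt hsq
  constructor <;> linarith [abs_le.mp this]

theorem ContinuousLinearMap.norm_inner_apply_self_le_norm_sub {T S : H →L[ℂ] H} {c : H}
    (hc : ‖c‖ = 1) (hS : S c = 0) :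
    ‖⟪c, T c⟫‖ ≤ ‖T - S‖ := by
  calc ‖⟪c, T c⟫‖ = ‖⟪c, (T - S) c⟫‖ := by simp [hS]
    _ ≤ ‖c‖ * ‖(T - S) c‖ := norm_inner_le_norm _ _
    _ ≤ ‖T - S‖ := by simpa [hc] using (T - S).le_opNorm c

end InnerProductSpace

theorem Matrix.exists_norm_eq_one_toEuclideanCLM_apply_eq_zero {𝕜 ι : Type*} [RCLike 𝕜]
    [Fintype ι] [DecidableEq ι] {M : Matrix ι ι 𝕜} (hM : ¬IsUnit M) :
    ∃ c : EuclideanSpace 𝕜 ι, ‖c‖ = 1 ∧ Matrix.toEuclideanCLM (𝕜 := 𝕜) M c = 0 := by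
  obtain ⟨v, hv, hMv⟩ := Matrix.exists_mulVec_eq_zero_iff.mpr
    (by rwa [Matrix.isUnit_iff_isUnit_det, isUnit_iff_ne_zero, not_not] at hM)
  have hv' : WithLp.toLp 2 v ≠ 0 := by simpa using hv
  refine ⟨(‖WithLp.toLp 2 v‖⁻¹ : 𝕜) • WithLp.toLp 2 v, norm_smul_inv_norm hv', ?_⟩
  rw [map_smul, Matrix.toEuclideanCLM_toLp, hMv]
  simp

theorem Matrix.inner_toEuclideanCLM_apply_eq_inner_sum {ι E : Type*} [Fintype ι] [DecidableEq ι]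
    [NormedAddCommGroup E] [InnerProductSpace ℂ E] {B : Matrix ι ι ℂ} {f g : ι → E}
    (hB : ∀ j k, B j k = ⟪f k, g j⟫) (c : EuclideanSpace ℂ ι) :
    ⟪c, Matrix.toEuclideanCLM (𝕜 := ℂ) B c⟫ = ⟪∑ k, star (c k) • f k, ∑ j, star (c j) • g j⟫ := by
  obtain ⟨c⟩ := c
  rw [Matrix.toEuclideanCLM_toLp, PiLp.inner_apply, sum_inner]
  simp only [inner_sum, inner_smul_left, inner_smul_right, Matrix.mulVec, dotProduct, hB]
  rw [Finset.sum_comm]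
  refine Finset.sum_congr rfl fun j _ => Finset.sum_congr rfl fun k _ => ?_
  simp only [RCLike.inner_apply, Complex.star_def, Complex.conj_conj]
  ring

theorem norm_quadratic_pencil_sub_le {E : Type*} [SeminormedAddCommGroup E] [NormedSpace ℂ E]
    {X0 X1 X2 Y0 Y1 Y2 : E} {ε0 ε1 ε2 : ℝ} (h0 : ‖X0 - Y0‖ ≤ ε0) (h1 : ‖X1 - Y1‖ ≤ ε1)
    (h2 : ‖X2 - Y2‖ ≤ ε2) (ζ : ℂ) :
    ‖(X0 - (2 * ζ) • X1 + ζ ^ 2 • X2) - (Y0 - (2 * ζ) • Y1 + ζ ^ 2 • Y2)‖ ≤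
      ‖ζ‖ ^ 2 * ε2 + 2 * ‖ζ‖ * ε1 + ε0 := by
  have : (X0 - (2 * ζ) • X1 + ζ ^ 2 • X2) - (Y0 - (2 * ζ) • Y1 + ζ ^ 2 • Y2) =
      (X0 - Y0) - (2 * ζ) • (X1 - Y1) + ζ ^ 2 • (X2 - Y2) := by module
  rw [this]
  have h1' : ‖(2 * ζ) • (X1 - Y1)‖ ≤ 2 * ‖ζ‖ * ε1 := by
    rw [norm_smul, norm_mul, Complex.norm_two]; gcongr
  have h2' : ‖ζ ^ 2 • (X2 - Y2)‖ ≤ ‖ζ‖ ^ 2 * ε2 := by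
    rw [norm_smul, norm_pow]; gcongr
  linarith [norm_add_le_of_le (norm_sub_le_of_le h0 h1') h2']

theorem stmt4_general {H : Type*} [NormedAddCommGroup H] [InnerProductSpace ℂ H] [CompleteSpace H]
    (A : H →L[ℂ] H) (hA : IsSelfAdjoint A) (n : ℕ)
    (e : Fin n → H)
    (β : ℝ) (hβ : 0 < β)
    (hβ' : ∀ c : Fin n → ℂ, β * Real.sqrt (∑ j, ‖c j‖ ^ 2) ≤ ‖∑ j, c j • e j‖)
    (A0 A1 A2 : Matrix (Fin n) (Fin n) ℂ)
    (hA0 : ∀ j k, A0 j k = ⟪A (e k), A (e j)⟫)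
    (hA1 : ∀ j k, A1 j k = ⟪e k, A (e j)⟫)
    (hA2 : ∀ j k, A2 j k = ⟪e k, e j⟫)
    (tA0 tA1 tA2 : Matrix (Fin n) (Fin n) ℂ) (ε0 ε1 ε2 : ℝ)
    (h0 : ‖Matrix.toEuclideanCLM (𝕜 := ℂ) (A0 - tA0)‖ ≤ ε0)
    (h1 : ‖Matrix.toEuclideanCLM (𝕜 := ℂ) (A1 - tA1)‖ ≤ ε1)
    (h2 : ‖Matrix.toEuclideanCLM (𝕜 := ℂ) (A2 - tA2)‖ ≤ ε2)
    (ζ : ℂ) (hζ : ¬ IsUnit (tA0 - (2 * ζ) • tA1 + ζ ^ 2 • tA2)) :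
    ∃ x ∈ Set.Icc
        (ζ.re - Real.sqrt (|ζ.im| ^ 2 + (β ^ 2)⁻¹ * (‖ζ‖ ^ 2 * ε2 + 2 * ‖ζ‖ * ε1 + ε0)))
        (ζ.re + Real.sqrt (|ζ.im| ^ 2 + (β ^ 2)⁻¹ * (‖ζ‖ ^ 2 * ε2 + 2 * ‖ζ‖ * ε1 + ε0))),
      (x : ℂ) ∈ spectrum ℂ A := by
  obtain ⟨c, hc, hMc⟩ := Matrix.exists_norm_eq_one_toEuclideanCLM_apply_eq_zero hζ
  set u : H := ∑ j, star (c j) • e j with hu_def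
  have hu : β ≤ ‖u‖ := by
    have hc' : √(∑ j, ‖star (c j)‖ ^ 2) = 1 := by simpa [EuclideanSpace.norm_eq] using hc
    have h := hβ' fun j => star (c j)
    rwa [hc', mul_one] at h
  have hAu : A u = ∑ j, star (c j) • A (e j) := by simp [u, map_sum]
  have hquad : ⟪c, Matrix.toEuclideanCLM (𝕜 := ℂ) (A0 - (2 * ζ) • A1 + ζ ^ 2 • A2) c⟫ =
      ⟪A u, A u⟫ - 2 * ζ * ⟪u, A u⟫ + ζ ^ 2 * ⟪u, u⟫ := by
    simp only [map_add, map_sub, map_smul, add_apply, sub_apply, smul_apply, inner_add_right,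
      inner_sub_right, inner_smul_right, Matrix.inner_toEuclideanCLM_apply_eq_inner_sum hA0,
      Matrix.inner_toEuclideanCLM_apply_eq_inner_sum hA1,
      Matrix.inner_toEuclideanCLM_apply_eq_inner_sum hA2, ← hAu, ← hu_def]
  refine hA.exists_mem_spectrum_Icc_of_norm_le hβ hu ζ ?_
  rw [← hquad]
  refine (ContinuousLinearMap.norm_inner_apply_self_le_norm_sub hc hMc).trans ?_
  simp only [map_add, map_sub, map_smul]
  exact norm_quadratic_pencil_sub_le (by rwa [← map_sub]) (by rwa [← map_sub])
    (by rwa [← map_sub]) ζ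

/-- Theorem 2.3: if `‖Aₚ − Ãₚ‖ ≤ εₚ` for `p = 0,1,2` and
`Ã₀ − 2ζÃ₁ + ζ²Ã₂` is singular, then the spectrum of `A` meets
`[Re ζ − δ̃, Re ζ + δ̃]` with `δ̃ = √(|Im ζ|² + β⁻²(|ζ|²ε₂ + 2|ζ|ε₁ + ε₀))`. -/
theorem stmt4 {H : Type*} [NormedAddCommGroup H] [InnerProductSpace ℂ H] [CompleteSpace H]
    (A : H →L[ℂ] H) (hA : IsSelfAdjoint A) (n : ℕ)
    (e : Fin n → H) (he : ∀ j, ‖e j‖ = 1) (hli : LinearIndependent ℂ e)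
    (β : ℝ) (hβ : 0 < β)
    (hβ' : ∀ c : Fin n → ℂ, β * Real.sqrt (∑ j, ‖c j‖ ^ 2) ≤ ‖∑ j, c j • e j‖)
    (A0 A1 A2 : Matrix (Fin n) (Fin n) ℂ)
    (hA0 : ∀ j k, A0 j k = ⟪A (e k), A (e j)⟫)
    (hA1 : ∀ j k, A1 j k = ⟪e k, A (e j)⟫)
    (hA2 : ∀ j k, A2 j k = ⟪e k, e j⟫)
    (tA0 tA1 tA2 : Matrix (Fin n) (Fin n) ℂ) (ε0 ε1 ε2 : ℝ)
    (hε0 : 0 ≤ ε0) (hε1 : 0 ≤ ε1) (hε2 : 0 ≤ ε2)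
    (h0 : ‖Matrix.toEuclideanCLM (𝕜 := ℂ) (A0 - tA0)‖ ≤ ε0)
    (h1 : ‖Matrix.toEuclideanCLM (𝕜 := ℂ) (A1 - tA1)‖ ≤ ε1)
    (h2 : ‖Matrix.toEuclideanCLM (𝕜 := ℂ) (A2 - tA2)‖ ≤ ε2)
    (ζ : ℂ) (hζ : ¬ IsUnit (tA0 - (2 * ζ) • tA1 + ζ ^ 2 • tA2)) :
    ∃ x ∈ Set.Icc
        (ζ.re - Real.sqrt (|ζ.im| ^ 2 + (β ^ 2)⁻¹ * (‖ζ‖ ^ 2 * ε2 + 2 * ‖ζ‖ * ε1 + ε0)))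
        (ζ.re + Real.sqrt (|ζ.im| ^ 2 + (β ^ 2)⁻¹ * (‖ζ‖ ^ 2 * ε2 + 2 * ‖ζ‖ * ε1 + ε0))),
      (x : ℂ) ∈ spectrum ℂ A :=
  stmt4_general A hA n e β hβ hβ' A0 A1 A2 hA0 hA1 hA2 tA0 tA1 tA2 ε0 ε1 ε2 h0 h1 h2 ζ hζ
end

section
/- (Universal non-pollution property) Let A be a bounded self-adjoint operator on a complex Hilbert space H and L ⊂ H a nonzero finite-dimensional subspace. Suppose ζ ∈ ℂ is a solution of problem (Q), i.e. there exists a nonzero u ∈ L with ⟨Au, Av⟩ − 2ζ⟨Au, v⟩ + ζ²⟨u, v⟩ = 0 for all v ∈ L. Then dist(Re ζ, Spec(A)) ≤ |Im ζ|. -/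
/-!
Testing (Q) with `v = u` and using that `⟪u, A u⟫` is real, the real part of the equation reads
`‖(A - Re ζ) u‖ = |Im ζ| ‖u‖`. On the other hand, by the continuous functional calculus the
resolvent of a normal operator at `z` has norm at most `1 / dist(z, Spec A)`, so
`dist(z, Spec A) ‖u‖ ≤ ‖(A - z) u‖` for every `u`.
-/

open scoped ComplexInnerProductSpace

open Metric

theorem LinearMap.IsSymmetric.norm_apply_sub_re_smul_eq {H : Type*} [NormedAddCommGroup H]
    [InnerProductSpace ℂ H] {T : H →ₗ[ℂ] H} (hT : T.IsSymmetric) {ζ : ℂ} {u : H}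
    (hζ : ⟪T u, T u⟫ - 2 * ζ * ⟪u, T u⟫ + ζ ^ 2 * ⟪u, u⟫ = 0) :
    ‖T u - (ζ.re : ℂ) • u‖ = |ζ.im| * ‖u‖ := by
  set c := (⟪T u, u⟫).re
  have hc : ⟪u, T u⟫ = c := by rw [← hT u u]; exact (hT.coe_re_inner_apply_self u).symm
  rw [hc, inner_self_eq_norm_sq_to_K (𝕜 := ℂ), inner_self_eq_norm_sq_to_K (𝕜 := ℂ)] at hζ
  have hre : ‖T u‖ ^ 2 - 2 * ζ.re * c + (ζ.re ^ 2 - ζ.im ^ 2) * ‖u‖ ^ 2 = 0 := by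
    simpa [sq] using congrArg Complex.re hζ
  rw [← pow_left_inj₀ (norm_nonneg _) (by positivity) two_ne_zero, norm_sub_sq (𝕜 := ℂ),
    inner_smul_right, RCLike.re_to_complex, Complex.re_ofReal_mul, norm_smul, Complex.norm_real,
    Real.norm_eq_abs, mul_pow, mul_pow, sq_abs, sq_abs]
  linarith

theorem IsStarNormal.norm_resolvent_le {A : Type*} [CStarAlgebra A] {a : A} [IsStarNormal a]
    {z : ℂ} (hz : z ∉ spectrum ℂ a) :
    ‖resolvent a z‖ ≤ (infDist z (spectrum ℂ a))⁻¹ := by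
  have hcfc : cfc (fun x ↦ (z - x)⁻¹) a = resolvent a z := by
    rw [cfc_inv (z - ·) a fun x hx h ↦ hz (sub_eq_zero.mp h ▸ hx), cfc_sub _ _ a, cfc_const z a,
      cfc_id' ℂ a]
    rfl
  rw [← hcfc]
  refine norm_cfc_le (inv_nonneg.mpr infDist_nonneg) fun x hx ↦ ?_
  have hd : 0 < infDist z (spectrum ℂ a) :=
    (spectrum.isClosed a).notMem_iff_infDist_pos ⟨x, hx⟩ |>.mp hz
  rw [norm_inv, ← dist_eq_norm]
  exact inv_anti₀ hd (infDist_le_dist_of_mem hx)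

theorem infDist_spectrum_mul_norm_le {H : Type*} [NormedAddCommGroup H] [InnerProductSpace ℂ H]
    [CompleteSpace H] (A : H →L[ℂ] H) [IsStarNormal A] (z : ℂ) (u : H) :
    infDist z (spectrum ℂ A) * ‖u‖ ≤ ‖A u - z • u‖ := by
  by_cases hz : z ∈ spectrum ℂ A
  · simp [infDist_zero_of_mem hz]
  have hunit : IsUnit (algebraMap ℂ (H →L[ℂ] H) z - A) := spectrum.notMem_iff.mp hz
  have hu : resolvent A z (z • u - A u) = u := by
    simpa [resolvent, Algebra.algebraMap_eq_smul_one] using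
      congr($(Ring.inverse_mul_cancel _ hunit) u)
  set d := infDist z (spectrum ℂ A)
  calc d * ‖u‖ ≤ d * (d⁻¹ * ‖z • u - A u‖) := by
        gcongr
        · exact infDist_nonneg
        · nth_rw 1 [← hu]
          exact (resolvent A z).le_of_opNorm_le (IsStarNormal.norm_resolvent_le hz) _
    _ ≤ ‖A u - z • u‖ := by
        rw [← mul_assoc, norm_sub_rev]
        exact mul_le_of_le_one_left (norm_nonneg _) mul_inv_le_one

theorem stmt6_general {H : Type*} [NormedAddCommGroup H] [InnerProductSpace ℂ H] [CompleteSpace H]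
    (A : H →L[ℂ] H) (hA : IsSelfAdjoint A)
    (L : Submodule ℂ H)
    (ζ : ℂ) (u : H) (huL : u ∈ L) (hu0 : u ≠ 0)
    (hQ : ∀ v ∈ L, ⟪A v, A u⟫ - 2 * ζ * ⟪v, A u⟫ + ζ ^ 2 * ⟪v, u⟫ = 0) :
    Metric.infDist ((ζ.re : ℂ)) (spectrum ℂ A) ≤ |ζ.im| := by
  have : IsStarNormal A := hA.isStarNormal
  refine le_of_mul_le_mul_right ?_ (norm_pos_iff.mpr hu0)
  calc infDist (ζ.re : ℂ) (spectrum ℂ A) * ‖u‖ ≤ ‖A u - (ζ.re : ℂ) • u‖ :=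
        infDist_spectrum_mul_norm_le A _ u
    _ = |ζ.im| * ‖u‖ := hA.isSymmetric.norm_apply_sub_re_smul_eq (hQ u huL)

/-- Universal non-pollution property: if `ζ` solves problem (Q), i.e. there is a nonzero
`u ∈ L` with `⟨Au, Av⟩ − 2ζ⟨Au, v⟩ + ζ²⟨u, v⟩ = 0` for all `v ∈ L`, then
`dist(Re ζ, Spec(A)) ≤ |Im ζ|`. -/
theorem stmt6 {H : Type*} [NormedAddCommGroup H] [InnerProductSpace ℂ H] [CompleteSpace H]
    (A : H →L[ℂ] H) (hA : IsSelfAdjoint A)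
    (L : Submodule ℂ H) [FiniteDimensional ℂ L] (hL : L ≠ ⊥)
    (ζ : ℂ) (u : H) (huL : u ∈ L) (hu0 : u ≠ 0)
    (hQ : ∀ v ∈ L, ⟪A v, A u⟫ - 2 * ζ * ⟪v, A u⟫ + ζ ^ 2 * ⟪v, u⟫ = 0) :
    Metric.infDist ((ζ.re : ℂ)) (spectrum ℂ A) ≤ |ζ.im| :=
  stmt6_general A hA L ζ u huL hu0 hQ
end

section
/- (Lemma 3.3, pseudospectrum characterization) Let A₀, A₁, A₂ be n×n complex matrices, M(z) := A₀ − 2zA₁ + z²A₂, and G(z) := min over nonzero v ∈ ℂⁿ of ‖M(z)v‖/‖v‖. Fix ζ ∈ ℂ and ε₀, ε₁, ε₂ ≥ 0. Then G(ζ) ≤ ε₀ + 2ε₁|ζ| + ε₂|ζ|² if and only if there exist n×n complex matrices Ã₀, Ã₁, Ã₂ with ‖Ãₚ − Aₚ‖ ≤ εₚ for p = 0,1,2 such that Ã₀ − 2ζÃ₁ + ζ²Ã₂ is singular (has determinant zero). -/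
/-!
By compactness of the unit sphere, `G(ζ) = ‖M(ζ) v‖` for some unit vector `v`. If this is at most
`s = ε₀ + 2ε₁|ζ| + ε₂|ζ|²`, Hahn–Banach gives a rank-one `Δ` with `‖Δ‖ ≤ 1` and `Δ v = -M(ζ) v / s`;
perturbing `Aₚ` by `cₚ Δ`, where `|cₚ| ≤ εₚ` are aligned with the phase of `ζ` so that
`c₀ - 2ζc₁ + ζ²c₂ = s`, makes `v` a kernel vector of the perturbed pencil at `ζ`. Conversely, a
kernel vector `v` of the perturbed pencil gives `M(ζ) v = -(Ã - A)(ζ) v`, of norm at most `s ‖v‖`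
by the triangle inequality.
-/

open Matrix

namespace ContinuousLinearMap

variable {𝕜 E F : Type*} [RCLike 𝕜] [NormedAddCommGroup E] [NormedSpace 𝕜 E]
  [NormedAddCommGroup F] [NormedSpace 𝕜 F]

/-- The minimum modulus; `G(z)` of the paper is that of `M(z)`. It is `sInf ∅ = 0` when `E = 0`. -/
noncomputable def minModulus (T : E →L[𝕜] F) : ℝ :=
  sInf {r : ℝ | ∃ v : E, v ≠ 0 ∧ r = ‖T v‖ / ‖v‖}

theorem minModulus_le (T : E →L[𝕜] F) {v : E} (hv : v ≠ 0) : T.minModulus ≤ ‖T v‖ / ‖v‖ :=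
  csInf_le ⟨0, by rintro r ⟨w, -, rfl⟩; positivity⟩ ⟨v, hv, rfl⟩

theorem exists_norm_eq_one_minModulus_eq [FiniteDimensional 𝕜 E] [Nontrivial E] (T : E →L[𝕜] F) :
    ∃ v : E, ‖v‖ = 1 ∧ T.minModulus = ‖T v‖ := by
  have : ProperSpace E := FiniteDimensional.proper 𝕜 E
  have hunit : ∀ w : E, w ≠ 0 → ‖(‖w‖⁻¹ : 𝕜) • w‖ = 1 := fun w hw => by
    rw [norm_smul, norm_inv, RCLike.norm_ofReal, abs_norm, inv_mul_cancel₀ (norm_ne_zero_iff.2 hw)]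
  obtain ⟨w₀, hw₀⟩ := exists_ne (0 : E)
  obtain ⟨v, hv, hmin⟩ := (isCompact_sphere (0 : E) 1).exists_isMinOn
    ⟨_, mem_sphere_zero_iff_norm.2 (hunit w₀ hw₀)⟩
    (by fun_prop : Continuous fun w => ‖T w‖).continuousOn
  rw [mem_sphere_zero_iff_norm] at hv
  have hv0 : v ≠ 0 := norm_ne_zero_iff.1 (hv ▸ one_ne_zero)
  refine ⟨v, hv, le_antisymm (by simpa [hv] using T.minModulus_le hv0) ?_⟩
  refine le_csInf ⟨_, v, hv0, rfl⟩ ?_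
  rintro r ⟨w, hw, rfl⟩
  calc ‖T v‖ ≤ ‖T ((‖w‖⁻¹ : 𝕜) • w)‖ := hmin (mem_sphere_zero_iff_norm.2 (hunit w hw))
    _ = ‖T w‖ / ‖w‖ := by
      rw [map_smul, norm_smul, norm_inv, RCLike.norm_ofReal, abs_norm, inv_mul_eq_div]

theorem exists_norm_eq_and_apply_eq {v : E} (hv : ‖v‖ = 1) (y : F) :
    ∃ Δ : E →L[𝕜] F, ‖Δ‖ = ‖y‖ ∧ Δ v = y := by
  obtain ⟨g, hg, hgv⟩ := exists_dual_vector 𝕜 v (hv ▸ one_ne_zero)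
  exact ⟨g.smulRight y, by rw [norm_smulRight_apply, hg, one_mul], by simp [hgv, hv]⟩

end ContinuousLinearMap

section QuadraticPencil

variable {M N : Type*} [AddCommGroup M] [Module ℂ M] [AddCommGroup N] [Module ℂ N]

def quadPencil (A₀ A₁ A₂ : M) (z : ℂ) : M := A₀ - (2 * z) • A₁ + z ^ 2 • A₂

theorem quadPencil_add (A₀ A₁ A₂ B₀ B₁ B₂ : M) (z : ℂ) :
    quadPencil (A₀ + B₀) (A₁ + B₁) (A₂ + B₂) z = quadPencil A₀ A₁ A₂ z + quadPencil B₀ B₁ B₂ z := by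
  unfold quadPencil; module

theorem quadPencil_smul_const (c₀ c₁ c₂ : ℂ) (D : M) (z : ℂ) :
    quadPencil (c₀ • D) (c₁ • D) (c₂ • D) z = quadPencil c₀ c₁ c₂ z • D := by
  unfold quadPencil; module

theorem map_quadPencil {F : Type*} [FunLike F M N] [LinearMapClass F ℂ M N] (f : F)
    (A₀ A₁ A₂ : M) (z : ℂ) : f (quadPencil A₀ A₁ A₂ z) = quadPencil (f A₀) (f A₁) (f A₂) z := by
  simp only [quadPencil, map_add, map_sub, map_smul]

end QuadraticPencil

theorem norm_quadPencil_le {E : Type*} [SeminormedAddCommGroup E] [NormedSpace ℂ E]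
    (A₀ A₁ A₂ : E) (z : ℂ) :
    ‖quadPencil A₀ A₁ A₂ z‖ ≤ ‖A₀‖ + 2 * ‖A₁‖ * ‖z‖ + ‖A₂‖ * ‖z‖ ^ 2 := by
  calc ‖quadPencil A₀ A₁ A₂ z‖ ≤ ‖A₀‖ + ‖(2 * z) • A₁‖ + ‖z ^ 2 • A₂‖ :=
        (norm_add_le _ _).trans (add_le_add_left (norm_sub_le _ _) _)
    _ = _ := by simp only [norm_smul, norm_mul, norm_pow, Complex.norm_ofNat]; ring

theorem exists_quadPencil_eq (z : ℂ) {ε₀ ε₁ ε₂ : ℝ} (h₀ : 0 ≤ ε₀) (h₁ : 0 ≤ ε₁) (h₂ : 0 ≤ ε₂) :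
    ∃ c₀ c₁ c₂ : ℂ, ‖c₀‖ ≤ ε₀ ∧ ‖c₁‖ ≤ ε₁ ∧ ‖c₂‖ ≤ ε₂ ∧
      quadPencil c₀ c₁ c₂ z = ((ε₀ + 2 * ε₁ * ‖z‖ + ε₂ * ‖z‖ ^ 2 : ℝ) : ℂ) := by
  -- the phase of `conj z`; its junk value `0` at `z = 0` is harmless, only `c₀` counts there
  set u : ℂ := starRingEnd ℂ z / ‖z‖
  have hu : ‖u‖ ≤ 1 := by
    rcases eq_or_ne z 0 with rfl | hz <;> simp [u, *]
  have hzu : z * u = ‖z‖ := by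
    rcases eq_or_ne z 0 with rfl | hz
    · simp [u]
    · rw [mul_div_assoc', Complex.mul_conj', sq, mul_div_cancel_right₀ _ (by simpa using hz)]
  refine ⟨ε₀, -(ε₁ * u), ε₂ * u ^ 2, ?_, ?_, ?_, ?_⟩
  · simp [abs_of_nonneg h₀]
  · rw [norm_neg, norm_mul, Complex.norm_real, Real.norm_of_nonneg h₁]
    exact mul_le_of_le_one_right h₁ hu
  · rw [norm_mul, norm_pow, Complex.norm_real, Real.norm_of_nonneg h₂]
    exact mul_le_of_le_one_right h₂ (pow_le_one₀ (norm_nonneg u) hu)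
  · simp only [quadPencil, smul_eq_mul]
    push_cast
    linear_combination (2 * ε₁ + ε₂ * (z * u + ‖z‖)) * hzu

section Perturbation

variable {E F : Type*} [NormedAddCommGroup E] [NormedSpace ℂ E] [NormedAddCommGroup F]
  [NormedSpace ℂ F]

theorem exists_perturbation_quadPencil_apply_eq_zero (T₀ T₁ T₂ : E →L[ℂ] F) {v : E}
    (hv : ‖v‖ = 1) (z : ℂ) {ε₀ ε₁ ε₂ : ℝ} (h₀ : 0 ≤ ε₀) (h₁ : 0 ≤ ε₁) (h₂ : 0 ≤ ε₂)
    (h : ‖quadPencil T₀ T₁ T₂ z v‖ ≤ ε₀ + 2 * ε₁ * ‖z‖ + ε₂ * ‖z‖ ^ 2) :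
    ∃ Δ₀ Δ₁ Δ₂ : E →L[ℂ] F, ‖Δ₀‖ ≤ ε₀ ∧ ‖Δ₁‖ ≤ ε₁ ∧ ‖Δ₂‖ ≤ ε₂ ∧
      quadPencil (T₀ + Δ₀) (T₁ + Δ₁) (T₂ + Δ₂) z v = 0 := by
  set s := ε₀ + 2 * ε₁ * ‖z‖ + ε₂ * ‖z‖ ^ 2
  set y := quadPencil T₀ T₁ T₂ z v
  have hs : 0 ≤ s := by positivity
  obtain ⟨c₀, c₁, c₂, hc₀, hc₁, hc₂, hc⟩ := exists_quadPencil_eq z h₀ h₁ h₂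
  obtain ⟨Δ, hΔ, hΔv⟩ :=
    ContinuousLinearMap.exists_norm_eq_and_apply_eq (𝕜 := ℂ) hv (-((s : ℂ)⁻¹ • y))
  have hΔ1 : ‖Δ‖ ≤ 1 := by
    rw [hΔ, norm_neg, norm_smul, norm_inv, Complex.norm_real, Real.norm_of_nonneg hs]
    exact inv_mul_le_one_of_le₀ h hs
  have hsy : (s : ℂ) • (s : ℂ)⁻¹ • y = y := by
    rcases hs.eq_or_lt with hs0 | hspos
    · rw [← hs0] at h
      rw [norm_le_zero_iff.1 h, smul_zero, smul_zero]
    · exact smul_inv_smul₀ (by exact_mod_cast hspos.ne') y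
  have hsmall : ∀ {c : ℂ} {ε : ℝ}, ‖c‖ ≤ ε → ‖c • Δ‖ ≤ ε := fun hc =>
    (norm_smul_le _ _).trans ((mul_le_of_le_one_right (norm_nonneg _) hΔ1).trans hc)
  refine ⟨c₀ • Δ, c₁ • Δ, c₂ • Δ, hsmall hc₀, hsmall hc₁, hsmall hc₂, ?_⟩
  rw [quadPencil_add, quadPencil_smul_const, hc, _root_.add_apply,
    _root_.smul_apply, hΔv, smul_neg, hsy, add_neg_cancel]

theorem norm_quadPencil_apply_le_of_apply_eq_zero {S₀ S₁ S₂ T₀ T₁ T₂ : E →L[ℂ] F} {v : E} {z : ℂ}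
    (hS : quadPencil S₀ S₁ S₂ z v = 0) {ε₀ ε₁ ε₂ : ℝ} (h₀ : ‖S₀ - T₀‖ ≤ ε₀) (h₁ : ‖S₁ - T₁‖ ≤ ε₁)
    (h₂ : ‖S₂ - T₂‖ ≤ ε₂) :
    ‖quadPencil T₀ T₁ T₂ z v‖ ≤ (ε₀ + 2 * ε₁ * ‖z‖ + ε₂ * ‖z‖ ^ 2) * ‖v‖ := by
  have hT : quadPencil T₀ T₁ T₂ z v = -quadPencil (S₀ - T₀) (S₁ - T₁) (S₂ - T₂) z v := by
    rw [eq_neg_iff_add_eq_zero, ← _root_.add_apply, ← quadPencil_add]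
    simpa using hS
  rw [hT, norm_neg]
  refine (ContinuousLinearMap.le_opNorm _ v).trans (mul_le_mul_of_nonneg_right ?_ (norm_nonneg v))
  refine (norm_quadPencil_le _ _ _ z).trans ?_
  gcongr

end Perturbation

theorem Matrix.det_eq_zero_iff_exists_toEuclideanCLM_apply_eq_zero {n 𝕜 : Type*} [Fintype n]
    [DecidableEq n] [RCLike 𝕜] (A : Matrix n n 𝕜) :
    A.det = 0 ↔ ∃ v ≠ 0, toEuclideanCLM (𝕜 := 𝕜) A v = 0 := by
  rw [← exists_mulVec_eq_zero_iff]
  constructor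
  · rintro ⟨v, hv, hAv⟩
    exact ⟨WithLp.toLp 2 v, by simpa using hv, by rw [toEuclideanCLM_toLp, hAv]; rfl⟩
  · rintro ⟨v, hv, hAv⟩
    exact ⟨WithLp.ofLp v, by simpa using hv, by rw [← ofLp_toEuclideanCLM, hAv]; rfl⟩

/-- Lemma 3.3 (pseudospectrum characterization): with `M(z) = A₀ − 2zA₁ + z²A₂` and
`G(z) = min_{0≠v∈ℂⁿ} ‖M(z)v‖/‖v‖`, one has `G(ζ) ≤ ε₀ + 2ε₁|ζ| + ε₂|ζ|²` iff some
perturbed matrix polynomial `Ã₀ − 2ζÃ₁ + ζ²Ã₂` with `‖Ãₚ − Aₚ‖ ≤ εₚ` is singular. -/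
theorem stmt10 (n : ℕ) (hn : 0 < n) (A0 A1 A2 : Matrix (Fin n) (Fin n) ℂ) (ζ : ℂ)
    (ε0 ε1 ε2 : ℝ) (hε0 : 0 ≤ ε0) (hε1 : 0 ≤ ε1) (hε2 : 0 ≤ ε2) :
    sInf {r : ℝ | ∃ v : EuclideanSpace ℂ (Fin n), v ≠ 0 ∧
        r = ‖Matrix.toEuclideanCLM (𝕜 := ℂ) (A0 - (2 * ζ) • A1 + ζ ^ 2 • A2) v‖ / ‖v‖}
      ≤ ε0 + 2 * ε1 * ‖ζ‖ + ε2 * ‖ζ‖ ^ 2 ↔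
    ∃ tA0 tA1 tA2 : Matrix (Fin n) (Fin n) ℂ,
      ‖Matrix.toEuclideanCLM (𝕜 := ℂ) (tA0 - A0)‖ ≤ ε0 ∧
      ‖Matrix.toEuclideanCLM (𝕜 := ℂ) (tA1 - A1)‖ ≤ ε1 ∧
      ‖Matrix.toEuclideanCLM (𝕜 := ℂ) (tA2 - A2)‖ ≤ ε2 ∧
      (tA0 - (2 * ζ) • tA1 + ζ ^ 2 • tA2).det = 0 := by
  let e := toEuclideanCLM (n := Fin n) (𝕜 := ℂ)
  change (e (quadPencil A0 A1 A2 ζ)).minModulus ≤ _ ↔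
    ∃ tA0 tA1 tA2 : Matrix (Fin n) (Fin n) ℂ, ‖e (tA0 - A0)‖ ≤ ε0 ∧ ‖e (tA1 - A1)‖ ≤ ε1 ∧
      ‖e (tA2 - A2)‖ ≤ ε2 ∧ (quadPencil tA0 tA1 tA2 ζ).det = 0
  simp only [map_quadPencil, map_sub, det_eq_zero_iff_exists_toEuclideanCLM_apply_eq_zero]
  constructor
  · intro h
    have : Nonempty (Fin n) := ⟨⟨0, hn⟩⟩
    obtain ⟨v, hv, hG⟩ := ContinuousLinearMap.exists_norm_eq_one_minModulus_eq
      (quadPencil (e A0) (e A1) (e A2) ζ)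
    obtain ⟨Δ₀, Δ₁, Δ₂, h₀, h₁, h₂, hΔ⟩ :=
      exists_perturbation_quadPencil_apply_eq_zero _ _ _ hv ζ hε0 hε1 hε2 (hG ▸ h)
    refine ⟨A0 + e.symm Δ₀, A1 + e.symm Δ₁, A2 + e.symm Δ₂, by simpa, by simpa, by simpa,
      v, norm_ne_zero_iff.1 (hv ▸ one_ne_zero), by simpa [e] using hΔ⟩
  · rintro ⟨tA0, tA1, tA2, h0, h1, h2, v, hv, hker⟩
    exact (ContinuousLinearMap.minModulus_le _ hv).trans <| div_le_of_le_mul₀ (norm_nonneg v)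
      (by positivity) (norm_quadPencil_apply_le_of_apply_eq_zero hker h0 h1 h2)
end

section
/- (Lemma 3.5) Let A be a bounded self-adjoint operator on a complex Hilbert space H and let λ be an eigenvalue of A. Suppose the sequence of finite-dimensional subspaces Lₙ (with orthonormal bases e₁,…,eₙ and orthogonal projections Πₙ) satisfies condition (H) at λ. Then Gₙ(λ) → 0 as n → ∞. -/
/-!
Test the matrix `M⁽ⁿ⁾(λ)` on the conjugated coefficients `v = (⟪u, eₖ⟫)ₖ` of an eigenvector `u`.
As the entries of `M⁽ⁿ⁾(λ)` are sesquilinear in the basis vectors, `M⁽ⁿ⁾(λ) v` is the conjugate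
coefficient vector of `S₁₁ - 2λ S₀₁ + λ² S₀₀`, where `S_pq = ∑ⱼ ⟪A^q eⱼ, A^p Πₙu⟫ eⱼ`; by
condition (H) this tends to `(λ² - 2λ² + λ²) u = 0`. Meanwhile `‖v‖ = ‖Πₙu‖ → ‖u‖ ≠ 0` (condition
(H) with `p = q = 0`), so `Gₙ(λ) ≤ ‖M⁽ⁿ⁾(λ) v‖ / ‖v‖ → 0`.
-/

open scoped ComplexInnerProductSpace Matrix
open Filter Topology

section
variable {ι 𝕜 : Type*} [Fintype ι] [RCLike 𝕜]

lemma EuclideanSpace.norm_toLp_star (c : ι → 𝕜) :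
    ‖WithLp.toLp 2 (star c)‖ = ‖WithLp.toLp 2 c‖ := by
  simp [EuclideanSpace.norm_eq]

variable {E : Type*} [NormedAddCommGroup E] [InnerProductSpace 𝕜 E]

lemma Orthonormal.norm_sum_smul {e : ι → E} (he : Orthonormal 𝕜 e) (c : ι → 𝕜) :
    ‖∑ i, c i • e i‖ = ‖WithLp.toLp 2 c‖ := by
  rw [EuclideanSpace.norm_eq, norm_eq_sqrt_re_inner (𝕜 := 𝕜), he.inner_sum c c Finset.univ]
  simp only [RCLike.conj_mul, ← RCLike.ofReal_pow, ← RCLike.ofReal_sum, RCLike.ofReal_re]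

end

section
variable {E F : Type*} [NormedAddCommGroup E] [NormedAddCommGroup F]

lemma sInf_norm_div_nonneg (T : E → F) :
    0 ≤ sInf {r : ℝ | ∃ w, w ≠ 0 ∧ r = ‖T w‖ / ‖w‖} :=
  Real.sInf_nonneg fun _ ⟨_, _, hr⟩ => hr ▸ by positivity

lemma sInf_norm_div_le (T : E → F) {v : E} (hv : v ≠ 0) :
    sInf {r : ℝ | ∃ w, w ≠ 0 ∧ r = ‖T w‖ / ‖w‖} ≤ ‖T v‖ / ‖v‖ :=
  csInf_le ⟨0, fun _ ⟨_, _, hr⟩ => hr ▸ by positivity⟩ ⟨v, hv, rfl⟩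

end

lemma tendsto_sInf_norm_div {α : Type*} {l : Filter α} {E F : α → Type*}
    [∀ a, NormedAddCommGroup (E a)] [∀ a, NormedAddCommGroup (F a)]
    (T : ∀ a, E a → F a) (v : ∀ a, E a) {c : ℝ} (hc : c ≠ 0)
    (hv : Tendsto (fun a => ‖v a‖) l (𝓝 c)) (hT : Tendsto (fun a => ‖T a (v a)‖) l (𝓝 0)) :
    Tendsto (fun a => sInf {r : ℝ | ∃ w, w ≠ 0 ∧ r = ‖T a w‖ / ‖w‖}) l (𝓝 0) := by
  have hv0 : ∀ᶠ a in l, v a ≠ 0 :=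
    (hv.eventually_ne hc).mono fun a ha hva => ha (by rw [hva, norm_zero])
  have hratio : Tendsto (fun a => ‖T a (v a)‖ / ‖v a‖) l (𝓝 0) := by
    simpa only [zero_div, Pi.div_def] using hT.div hv hc
  exact squeeze_zero' (.of_forall fun a => sInf_norm_div_nonneg (T a))
    (hv0.mono fun a => sInf_norm_div_le (T a)) hratio

section
variable {H : Type*} [NormedAddCommGroup H] [InnerProductSpace ℂ H] {ι : Type*} [Fintype ι]
  {e : ι → H}

noncomputable def fourierSum (e : ι → H) (u : H) : H := ∑ k, ⟪e k, u⟫ • e k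

lemma Orthonormal.fourierSum_fourierSum (he : Orthonormal ℂ e) (u : H) :
    fourierSum e (fourierSum e u) = fourierSum e u :=
  Finset.sum_congr rfl fun j _ => by rw [fourierSum, he.inner_right_fintype]

lemma Orthonormal.norm_toLp_inner (he : Orthonormal ℂ e) (u : H) :
    ‖WithLp.toLp 2 fun k => ⟪u, e k⟫‖ = ‖fourierSum e u‖ := by
  rw [fourierSum, he.norm_sum_smul, ← EuclideanSpace.norm_toLp_star]
  simp only [Pi.star_def, inner_conj_symm, RCLike.star_def]

/-- The matrix `M⁽ⁿ⁾(z)`: Mathlib's inner product is conjugate-linear in its first argument,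
so the paper's `⟨Aeⱼ, Aeₖ⟩` is `⟪A (e k), A (e j)⟫` here. -/
noncomputable def pencilMatrix (A : H →L[ℂ] H) (e : ι → H) (z : ℂ) : Matrix ι ι ℂ :=
  Matrix.of fun j k => ⟪A (e k), A (e j)⟫ - 2 * z * ⟪e k, A (e j)⟫ + z ^ 2 * ⟪e k, e j⟫

lemma pencilMatrix_mulVec (A : H →L[ℂ] H) (z : ℝ) (u : H) :
    pencilMatrix A e z *ᵥ (fun k => ⟪u, e k⟫) = star fun j =>
      ⟪A (e j), A (fourierSum e u)⟫ - 2 * z * ⟪A (e j), fourierSum e u⟫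
        + z ^ 2 * ⟪e j, fourierSum e u⟫ := by
  ext j
  simp only [Matrix.mulVec, dotProduct, pencilMatrix, Matrix.of_apply, fourierSum, map_sum,
    map_smul, inner_sum, inner_smul_right, Pi.star_apply, RCLike.star_def, map_add, map_sub,
    map_mul, inner_conj_symm, Complex.conj_ofReal, map_ofNat, map_pow, Finset.mul_sum,
    ← Finset.sum_sub_distrib, ← Finset.sum_add_distrib]
  refine Finset.sum_congr rfl fun k _ => ?_
  ring

lemma Orthonormal.norm_pencilMatrix_apply [DecidableEq ι] (he : Orthonormal ℂ e)
    (A : H →L[ℂ] H) (z : ℝ) (u : H) :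
    ‖Matrix.toEuclideanCLM (𝕜 := ℂ) (pencilMatrix A e z) (WithLp.toLp 2 fun k => ⟪u, e k⟫)‖ =
      ‖∑ j, ⟪A (e j), A (fourierSum e u)⟫ • e j
        - (2 * z : ℂ) • ∑ j, ⟪A (e j), fourierSum e u⟫ • e j
        + (z : ℂ) ^ 2 • fourierSum e u‖ := by
  rw [Matrix.toEuclideanCLM_toLp, pencilMatrix_mulVec, EuclideanSpace.norm_toLp_star,
    ← he.norm_sum_smul]
  conv_rhs => enter [1, 2, 2]; rw [← he.fourierSum_fourierSum u, fourierSum]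
  simp only [Finset.smul_sum, ← Finset.sum_sub_distrib, ← Finset.sum_add_distrib, add_smul,
    sub_smul, mul_smul]
end

theorem stmt12_general {H : Type*} [NormedAddCommGroup H] [InnerProductSpace ℂ H]
    (A : H →L[ℂ] H)
    (e : ∀ n : ℕ, Fin n → H) (he : ∀ n, Orthonormal ℂ (e n))
    (lam : ℝ) (hlam : ∃ u : H, u ≠ 0 ∧ A u = (lam : ℂ) • u)
    (G : ℕ → ℂ → ℝ)
    (hG : ∀ n z, G n z = sInf {r : ℝ | ∃ v : EuclideanSpace ℂ (Fin n), v ≠ 0 ∧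
        r = ‖Matrix.toEuclideanCLM (𝕜 := ℂ)
            (Matrix.of fun j k : Fin n =>
              ⟪A (e n k), A (e n j)⟫ - 2 * z * ⟪e n k, A (e n j)⟫
                + z ^ 2 * ⟪e n k, e n j⟫) v‖ / ‖v‖})
    (hH : ∀ p q : ℕ, p ≤ 1 → q ≤ 1 → ∀ u : H, A u = (lam : ℂ) • u →
      Filter.Tendsto (fun n : ℕ =>
          ‖(∑ j : Fin n, ⟪(A ^ q) (e n j),
              (A ^ p) (∑ k : Fin n, ⟪e n k, u⟫ • e n k)⟫ • e n j)
            - ((lam : ℂ) ^ (p + q)) • u‖)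
        Filter.atTop (nhds 0)) :
    Filter.Tendsto (fun n => G n (lam : ℂ)) Filter.atTop (nhds 0) := by
  obtain ⟨u, hu0, hu⟩ := hlam
  have hS (p q : ℕ) (hp : p ≤ 1) (hq : q ≤ 1) :=
    tendsto_iff_norm_sub_tendsto_zero.2 (hH p q hp hq u hu)
  have h11 := hS 1 1 le_rfl le_rfl
  have h01 := hS 0 1 zero_le_one le_rfl
  have h00 := hS 0 0 zero_le_one zero_le_one
  simp only [pow_one, pow_zero, one_apply_eq_self, Nat.reduceAdd, one_smul, ← fourierSum.eq_1,
    (he _).fourierSum_fourierSum] at h11 h01 h00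
  have hres := (h11.sub (h01.const_smul (2 * lam : ℂ))).add (h00.const_smul ((lam : ℂ) ^ 2))
  rw [show (lam : ℂ) ^ 2 • u - (2 * lam : ℂ) • (lam : ℂ) • u + (lam : ℂ) ^ 2 • u = 0 by module]
    at hres
  simp only [hG]
  refine tendsto_sInf_norm_div
    (fun n => Matrix.toEuclideanCLM (𝕜 := ℂ) (pencilMatrix A (e n) lam))
    (fun n => WithLp.toLp 2 fun k => ⟪u, e n k⟫) (norm_ne_zero_iff.2 hu0) ?_ ?_
  · simpa only [(he _).norm_toLp_inner] using h00.norm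
  · simpa only [(he _).norm_pencilMatrix_apply, norm_zero] using hres.norm

/-- Lemma 3.5: if `λ` is an eigenvalue of the bounded self-adjoint operator `A` and the
subspaces `Lₙ` (spanned by the orthonormal vectors `e n 1, …, e n n`) satisfy condition
(H) at `λ`, then `Gₙ(λ) → 0` as `n → ∞`. -/
theorem stmt12 {H : Type*} [NormedAddCommGroup H] [InnerProductSpace ℂ H] [CompleteSpace H]
    (A : H →L[ℂ] H) (hA : IsSelfAdjoint A)
    (e : ∀ n : ℕ, Fin n → H) (he : ∀ n, Orthonormal ℂ (e n))
    (lam : ℝ) (hlam : ∃ u : H, u ≠ 0 ∧ A u = (lam : ℂ) • u)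
    (G : ℕ → ℂ → ℝ)
    (hG : ∀ n z, G n z = sInf {r : ℝ | ∃ v : EuclideanSpace ℂ (Fin n), v ≠ 0 ∧
        r = ‖Matrix.toEuclideanCLM (𝕜 := ℂ)
            (Matrix.of fun j k : Fin n =>
              ⟪A (e n k), A (e n j)⟫ - 2 * z * ⟪e n k, A (e n j)⟫
                + z ^ 2 * ⟪e n k, e n j⟫) v‖ / ‖v‖})
    (hH : ∀ p q : ℕ, p ≤ 1 → q ≤ 1 → ∀ u : H, A u = (lam : ℂ) • u →
      Filter.Tendsto (fun n : ℕ =>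
          ‖(∑ j : Fin n, ⟪(A ^ q) (e n j),
              (A ^ p) (∑ k : Fin n, ⟪e n k, u⟫ • e n k)⟫ • e n j)
            - ((lam : ℂ) ^ (p + q)) • u‖)
        Filter.atTop (nhds 0)) :
    Filter.Tendsto (fun n => G n (lam : ℂ)) Filter.atTop (nhds 0) :=
  stmt12_general A e he lam hlam G hG hH
end
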